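/- arXiv:2411.04376 — 2 statements merged into one kernel-verified Lean document; each statement's English description precedes it below -/
import Mathlib

section
/- Split conformal coverage: if Z_1,…,Z_{n+1} are exchangeable real-valued random variables and q is the ⌈(n+1)(1−α)⌉-th smallest value among Z_1,…,Z_n, then P(Z_{n+1} ≤ q) ≥ 1 − α, provided ⌈(n+1)(1−α)⌉ ≤ n. -/
/-!
Write `R_j = #{i | Z_i < Z_j}` for the rank of `Z_j`. For every outcome at least `k` indices `j`
have `R_j < k`, so the probabilities of the events `{R_j < k}` add up to at least `k`; by
exchangeability they are all equal, hence `P(R_{n+1} < k) ≥ k / (n + 1) ≥ 1 - α`. Finally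
`R_{n+1} < k` forces `Z_{n+1}` to be at most the `k`-th smallest of `Z_1, …, Z_n`.
-/

open MeasureTheory

/-- The `k`-th smallest element (1-indexed) of a list of reals. -/
noncomputable def kthSmallest (l : List ℝ) (k : ℕ) : ℝ :=
  (l.mergeSort (fun a b => a ≤ b)).getD (k - 1) 0

open Finset
open scoped ENNReal

section Rank

variable {ι α : Type*} [Fintype ι] [LinearOrder α]

def countLT (v : ι → α) (t : α) : ℕ := #{i | v i < t}

lemma countLT_comp_perm (v : ι → α) (σ : Equiv.Perm ι) (t : α) :
    countLT (fun i => v (σ i)) t = countLT v t :=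
  card_equiv σ (by simp)

lemma le_card_filter_countLT_lt (v : ι → α) {k : ℕ} (hk : k ≤ Fintype.card ι) :
    k ≤ #{j | countLT v (v j) < k} := by
  -- If some `j` has rank `≥ k`, all values below the least such `v j` have rank `< k`.
  rcases (univ.filter fun j => k ≤ countLT v (v j)).eq_empty_or_nonempty with hT | hT
  · rw [filter_eq_empty_iff] at hT
    rwa [filter_true_of_mem fun j _ => not_le.mp (hT (mem_univ j))]
  · obtain ⟨j₀, hj₀, hmin⟩ := exists_min_image _ v hT
    calc k ≤ countLT v (v j₀) := (mem_filter.mp hj₀).2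
      _ ≤ _ := card_le_card fun i hi => by
        simp only [mem_filter, mem_univ, true_and] at hi hmin ⊢
        exact not_le.mp fun hki => (hmin i hki).not_gt hi

end Rank

lemma List.countP_ofFn {α : Type*} {n : ℕ} (f : Fin n → α) (p : α → Bool) :
    (List.ofFn f).countP p = #{i | p (f i)} := by
  induction n with
  | zero => simp
  | succ n ih =>
    rw [List.ofFn_succ, List.countP_cons, ih, Fin.card_filter_univ_succ', add_comm]

lemma le_kthSmallest {l : List ℝ} {k : ℕ} {t : ℝ} (hk : k ≤ l.length)
    (h : l.countP (· < t) < k) : t ≤ kthSmallest l k := by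
  obtain ⟨s, hs⟩ : ∃ s, l.mergeSort (fun a b => a ≤ b) = s := ⟨_, rfl⟩
  have hperm : s.Perm l := hs ▸ l.mergeSort_perm _
  have hsorted : s.Pairwise (· ≤ ·) := hs ▸ List.pairwise_mergeSort' _ l
  have hk₁ : k - 1 < s.length := by rw [hperm.length_eq]; omega
  rw [kthSmallest, hs, List.getD_eq_getElem _ _ hk₁]
  by_contra! hlt
  have htake : ∀ a ∈ s.take k, a < t := by
    intro a ha
    obtain ⟨i, hi, rfl⟩ := List.mem_iff_getElem.mp ha
    rw [List.length_take] at hi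
    rw [List.getElem_take]
    exact (hsorted.rel_get_of_le (a := ⟨i, by omega⟩)
      (b := ⟨k - 1, hk₁⟩) (by simp only [Fin.mk_le_mk]; omega)).trans_lt hlt
  have hcount : k ≤ s.countP (· < t) := calc
    k = (s.take k).countP (· < t) := by
      rw [List.countP_eq_length.mpr (by simpa using htake), List.length_take]; omega
    _ ≤ s.countP (· < t) := (List.take_sublist k s).countP_le
  rw [hperm.countP_eq] at hcount
  omega

lemma le_kthSmallest_init_of_countLT_lt {n k : ℕ} (v : Fin (n + 1) → ℝ) (hk : k ≤ n)
    (h : countLT v (v (Fin.last n)) < k) :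
    v (Fin.last n) ≤ kthSmallest (List.ofFn fun i : Fin n => v i.castSucc) k := by
  refine le_kthSmallest (by simpa using hk) (lt_of_le_of_lt ?_ h)
  calc _ ≤ (List.ofFn v).countP (· < v (Fin.last n)) := by
        rw [List.ofFn_succ' v, List.concat_eq_append, List.countP_append]
        exact Nat.le_add_right _ _
    _ = countLT v (v (Fin.last n)) := (List.countP_ofFn v _).trans (by simp [countLT])

section Exchangeable

variable {Ω ι β : Type*} [MeasurableSpace Ω] [MeasurableSpace β]

def Exchangeable (μ : Measure Ω) (Z : ι → Ω → β) : Prop :=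
  ∀ σ : Equiv.Perm ι, μ.map (fun ω i => Z (σ i) ω) = μ.map (fun ω i => Z i ω)

lemma Exchangeable.measure_comp_perm_preimage {μ : Measure Ω} {Z : ι → Ω → β}
    (hexch : Exchangeable μ Z) (hZ : ∀ i, Measurable (Z i)) (σ : Equiv.Perm ι)
    {S : Set (ι → β)} (hS : MeasurableSet S) :
    μ {ω | (fun i => Z (σ i) ω) ∈ S} = μ {ω | (fun i => Z i ω) ∈ S} := by
  calc μ {ω | (fun i => Z (σ i) ω) ∈ S}
      = μ.map (fun ω i => Z (σ i) ω) S :=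
        (Measure.map_apply (measurable_pi_lambda _ fun i => hZ (σ i)) hS).symm
    _ = μ.map (fun ω i => Z i ω) S := by rw [hexch σ]
    _ = μ {ω | (fun i => Z i ω) ∈ S} := Measure.map_apply (measurable_pi_lambda _ hZ) hS

variable [Fintype ι] [LinearOrder β] [TopologicalSpace β] [OrderClosedTopology β]
  [SecondCountableTopology β] [OpensMeasurableSpace β]

lemma measurableSet_countLT_lt (j : ι) (k : ℕ) :
    MeasurableSet {v : ι → β | countLT v (v j) < k} := by
  have : Measurable fun v : ι → β => countLT v (v j) := by
    simp_rw [countLT, card_filter]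
    exact Finset.measurable_sum _ fun i _ => Measurable.ite
      (measurableSet_lt (measurable_pi_apply i) (measurable_pi_apply j))
      measurable_const measurable_const
  exact this measurableSet_Iio

lemma Exchangeable.measure_countLT_lt_eq [DecidableEq ι] {μ : Measure Ω} {Z : ι → Ω → β}
    (hexch : Exchangeable μ Z) (hZ : ∀ i, Measurable (Z i)) (k : ℕ) (j j' : ι) :
    μ {ω | countLT (Z · ω) (Z j ω) < k} = μ {ω | countLT (Z · ω) (Z j' ω) < k} := by
  refine Eq.trans ?_
    (hexch.measure_comp_perm_preimage hZ (Equiv.swap j j') (measurableSet_countLT_lt j' k))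
  congr 1
  ext ω
  change countLT (Z · ω) (Z j ω) < k ↔
    countLT (fun i => Z (Equiv.swap j j' i) ω) (Z (Equiv.swap j j' j') ω) < k
  rw [countLT_comp_perm (Z · ω), Equiv.swap_apply_right]

end Exchangeable

lemma le_sum_measure_of_forall_le_card {Ω ι : Type*} [MeasurableSpace Ω] [Fintype ι]
    {μ : Measure Ω} {A : ι → Set Ω} [∀ ω j, Decidable (ω ∈ A j)]
    (hA : ∀ j, MeasurableSet (A j)) {k : ℕ} (h : ∀ ω, k ≤ #{j | ω ∈ A j}) :
    k * μ Set.univ ≤ ∑ j, μ (A j) :=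
  calc k * μ Set.univ = ∫⁻ _, (k : ℝ≥0∞) ∂μ := (lintegral_const _).symm
    _ ≤ ∫⁻ ω, ∑ j, (A j).indicator 1 ω ∂μ := lintegral_mono fun ω => by
        simpa [Set.indicator_apply, Finset.sum_boole] using
          (Nat.cast_le.mpr (h ω) : (k : ℝ≥0∞) ≤ _)
    _ = ∑ j, μ (A j) := by
        rw [lintegral_finsetSum _ fun j _ => measurable_one.indicator (hA j)]
        simp [lintegral_indicator_one (hA _)]

lemma ENNReal.ofReal_le_of_natCeil_le_mul {m : ℕ} (hm : m ≠ 0) {x : ℝ} {p : ℝ≥0∞}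
    (h : (⌈m * x⌉₊ : ℝ≥0∞) ≤ m * p) : ENNReal.ofReal x ≤ p := by
  rw [← ENNReal.mul_le_mul_iff_right (by simpa) (ENNReal.natCast_ne_top m)]
  calc m * ENNReal.ofReal x = ENNReal.ofReal (m * x) := by
        rw [ENNReal.ofReal_mul (by positivity), ENNReal.ofReal_natCast]
    _ ≤ ENNReal.ofReal ⌈m * x⌉₊ := ENNReal.ofReal_le_ofReal (Nat.le_ceil _)
    _ = ⌈m * x⌉₊ := ENNReal.ofReal_natCast _
    _ ≤ m * p := h

theorem split_conformal_coverage_general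
    {Ω : Type*} [MeasurableSpace Ω] (μ : Measure Ω) [IsProbabilityMeasure μ]
    (n : ℕ) (α : ℝ)
    (Z : Fin (n + 1) → Ω → ℝ) (hZ : ∀ i, Measurable (Z i))
    (hexch : ∀ σ : Equiv.Perm (Fin (n + 1)),
      Measure.map (fun ω => fun i => Z (σ i) ω) μ =
        Measure.map (fun ω => fun i => Z i ω) μ)
    (hk : ⌈(n + 1 : ℝ) * (1 - α)⌉₊ ≤ n) :
    ENNReal.ofReal (1 - α) ≤
      μ {ω | Z (Fin.last n) ω ≤
        kthSmallest (List.ofFn fun i : Fin n => Z i.castSucc ω)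
          ⌈(n + 1 : ℝ) * (1 - α)⌉₊} := by
  set k := ⌈(n + 1 : ℝ) * (1 - α)⌉₊
  set A : Fin (n + 1) → Set Ω := fun j => {ω | countLT (Z · ω) (Z j ω) < k}
  have hA : ∀ j, MeasurableSet (A j) := fun j =>
    measurable_pi_lambda _ hZ (measurableSet_countLT_lt j k)
  have hA_eq : ∀ j, μ (A j) = μ (A (Fin.last n)) := fun j =>
    Exchangeable.measure_countLT_lt_eq hexch hZ k j _
  have hk_le : (k : ℝ≥0∞) ≤ (n + 1 : ℕ) * μ (A (Fin.last n)) := by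
    simpa [hA_eq] using le_sum_measure_of_forall_le_card (μ := μ) hA fun ω =>
      le_card_filter_countLT_lt (Z · ω) (by rw [Fintype.card_fin]; omega)
  calc ENNReal.ofReal (1 - α) ≤ μ (A (Fin.last n)) :=
        ENNReal.ofReal_le_of_natCeil_le_mul (m := n + 1) n.succ_ne_zero
          (by push_cast at hk_le ⊢; exact hk_le)
    _ ≤ _ := measure_mono fun ω hω => le_kthSmallest_init_of_countLT_lt (Z · ω) hk hω

/-- Split conformal coverage: for exchangeable `Z_1, …, Z_{n+1}` and `q` the
`⌈(n+1)(1−α)⌉`-th smallest among `Z_1, …, Z_n`, we have `P(Z_{n+1} ≤ q) ≥ 1 − α`. -/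
theorem split_conformal_coverage
    {Ω : Type*} [MeasurableSpace Ω] (μ : Measure Ω) [IsProbabilityMeasure μ]
    (n : ℕ) (hn : 0 < n) (α : ℝ) (hα : α ∈ Set.Ioo (0:ℝ) 1)
    (Z : Fin (n + 1) → Ω → ℝ) (hZ : ∀ i, Measurable (Z i))
    (hexch : ∀ σ : Equiv.Perm (Fin (n + 1)),
      Measure.map (fun ω => fun i => Z (σ i) ω) μ =
        Measure.map (fun ω => fun i => Z i ω) μ)
    (hk : ⌈(n + 1 : ℝ) * (1 - α)⌉₊ ≤ n) :
    ENNReal.ofReal (1 - α) ≤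
      μ {ω | Z (Fin.last n) ω ≤
        kthSmallest (List.ofFn fun i : Fin n => Z i.castSucc ω)
          ⌈(n + 1 : ℝ) * (1 - α)⌉₊} :=
  split_conformal_coverage_general μ n α Z hZ hexch hk
end

section
/- Empirical quantile validity: Given real numbers s_1,…,s_n and α ∈ (0,1), let q be the k-th smallest value with k = ⌈(n+1)(1−α)⌉ ≤ n. Then the fraction of indices i with s_i > q is at most α. -/
theorem List.countP_lt_getD_le_length_sub {α : Type*} [Preorder α] [DecidableLT α] {l : List α}
    (hl : l.Pairwise (· ≤ ·)) {k : ℕ} (hk : k ≤ l.length) (d : α) :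
    l.countP (fun x => l.getD (k - 1) d < x) ≤ l.length - k := by
  rcases Nat.eq_zero_or_pos k with rfl | hk0
  · simpa using List.countP_le_length
  have hq : l.getD (k - 1) d = l[k - 1] := List.getD_eq_getElem _ _ (by omega)
  have htake : (l.take k).countP (fun x => l.getD (k - 1) d < x) = 0 := by
    refine List.countP_eq_zero.2 fun x hx => ?_
    obtain ⟨i, hi, rfl⟩ := List.getElem_of_mem hx
    simp only [List.length_take] at hi
    rw [List.getElem_take, hq, decide_eq_true_eq]
    exact not_lt_of_ge <|
      hl.rel_get_of_le (a := ⟨i, by omega⟩) (b := ⟨k - 1, by omega⟩) (by simp; omega)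
  calc l.countP (fun x => l.getD (k - 1) d < x)
      = (l.take k).countP (fun x => l.getD (k - 1) d < x)
        + (l.drop k).countP (fun x => l.getD (k - 1) d < x) := by
        rw [← List.countP_append, List.take_append_drop]
    _ ≤ l.length - k := by rw [htake, zero_add, ← List.length_drop]; exact List.countP_le_length

theorem card_filter_eq_countP_ofFn {α : Type*} {n : ℕ} (s : Fin n → α) (p : α → Prop)
    [DecidablePred p] :
    (Finset.univ.filter fun i => p (s i)).card = (List.ofFn s).countP (fun x => p x) := by
  simp [List.countP_eq_length_filter, List.ofFn_eq_map, Finset.filter, Finset.card, Fin.univ_def,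
    List.filter_map, Function.comp_def]

theorem card_filter_kthSmallest_lt_le {n : ℕ} (s : Fin n → ℝ) {k : ℕ} (hk : k ≤ n) :
    (Finset.univ.filter fun i => kthSmallest (List.ofFn s) k < s i).card ≤ n - k := by
  have hperm := List.mergeSort_perm (List.ofFn s) (fun a b => a ≤ b)
  have hsorted := List.pairwise_mergeSort' (· ≤ ·) (List.ofFn s)
  rw [card_filter_eq_countP_ofFn, ← hperm.countP_eq]
  have hlen : ((List.ofFn s).mergeSort (fun a b => a ≤ b)).length = n := by
    rw [hperm.length_eq, List.length_ofFn]
  have := List.countP_lt_getD_le_length_sub hsorted (hlen ▸ hk) 0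
  rwa [hlen] at this

theorem sub_le_mul_of_mul_one_sub_le {n k : ℕ} {α : ℝ} (h : (n + 1 : ℝ) * (1 - α) ≤ k) :
    (n : ℝ) - k ≤ α * n := by
  rcases le_or_gt α 1 with hα | hα
  · nlinarith
  · nlinarith [(k.cast_nonneg : (0 : ℝ) ≤ k)]

theorem empirical_quantile_validity_general
    (n : ℕ) (α : ℝ)
    (s : Fin n → ℝ)
    (hk : ⌈(n + 1 : ℝ) * (1 - α)⌉₊ ≤ n) :
    ((Finset.univ.filter fun i : Fin n =>
        kthSmallest (List.ofFn s) ⌈(n + 1 : ℝ) * (1 - α)⌉₊ < s i).card : ℝ) / n ≤ α := by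
  set k := ⌈(n + 1 : ℝ) * (1 - α)⌉₊
  have hrank : (n + 1 : ℝ) * (1 - α) ≤ k := Nat.le_ceil _
  have hkn : (k : ℝ) ≤ n := by exact_mod_cast hk
  have hα : 0 ≤ α := by nlinarith
  refine div_le_of_le_mul₀ n.cast_nonneg hα ?_
  calc _ ≤ ((n - k : ℕ) : ℝ) := by exact_mod_cast card_filter_kthSmallest_lt_le s hk
    _ = n - k := Nat.cast_sub hk
    _ ≤ α * n := sub_le_mul_of_mul_one_sub_le hrank

/-- Empirical quantile validity: with `q` the `⌈(n+1)(1−α)⌉`-th smallest of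
`s_1, …, s_n`, the fraction of indices with `s_i > q` is at most `α`. -/
theorem empirical_quantile_validity
    (n : ℕ) (hn : 0 < n) (α : ℝ) (hα : α ∈ Set.Ioo (0:ℝ) 1)
    (s : Fin n → ℝ)
    (hk : ⌈(n + 1 : ℝ) * (1 - α)⌉₊ ≤ n) :
    ((Finset.univ.filter fun i : Fin n =>
        kthSmallest (List.ofFn s) ⌈(n + 1 : ℝ) * (1 - α)⌉₊ < s i).card : ℝ) / n ≤ α :=
  empirical_quantile_validity_general n α s hk
end
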